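/- arXiv:2305.08422 — 3 statements merged into one kernel-verified Lean document; each statement's English description precedes it below -/
import Mathlib

section
/- (Theorem 5.2, continuity of the divergence at the boundary) Let S ⊆ {1,…,N}, and let η, η' ∈ P lie in the relative interior of the face determined by S, i.e., l_r(η) = l_r(η') = 0 for r ∈ S and l_r(η) > 0, l_r(η') > 0 for r ∉ S. Then the iterated limit of the Bregman divergence exists and lim_{ξ'→η'} lim_{ξ→η} D(ξ‖ξ') = D̄(η‖η'), where both limits are taken within P° and D̄(η‖η') := (1/2)·Σ_{r∉S} ( l_r(η)·( log l_r(η) − log l_r(η') ) − ⟨η − η', ν_r⟩ ) + ⟨η' − η, ∇f(η')⟩ + f(η) − f(η'). (Equivalently: as ξ' → η' within P°, the inner limit D̄(η‖ξ') from the first step converges to D̄(η‖η'), which is the Bregman divergence of the boundary face.) -/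
/-!
Since `x log x` extends continuously by `0` to `x = 0`, the formula
`Φ = ½ Σ_r l_r log l_r + f` defines a continuous function on the whole space that agrees with `φ`
on `P°`. Hence the inner limit of `D(ξ‖ξ')` is the value at `η` of the continuous function
`ξ ↦ Φ ξ - Φ ξ' - ⟪ξ - ξ', ∇Φ ξ'⟫`, and with `∇Φ ξ' = ½ Σ_r (log l_r(ξ') + 1) ν_r + ∇f ξ'` and
`⟪η - ξ', ν_r⟫ = l_r(η) - l_r(ξ')` this value is `D̄(η‖ξ')`. In `D̄(η‖ξ')` the factor
`log l_r(ξ')` only occurs multiplied by `l_r(η)`, which vanishes exactly for `r ∈ S`, and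
`l_r(η') > 0` for the remaining `r`; so `ξ' ↦ D̄(η‖ξ')` is continuous at `η'`, and at `η'` the
summands with `r ∈ S` vanish.
-/

open scoped InnerProductSpace
open Filter Topology Real

section

variable {ι E : Type*} [NormedAddCommGroup E] [InnerProductSpace ℝ E]

-- At the boundary of `P` this uses `log 0 = 0`, i.e. the convention `0 · log 0 = 0`.
noncomputable def symplecticPotential [Fintype ι] (l : ι → E → ℝ) (f : E → ℝ) (ξ : E) : ℝ :=
  (1 / 2 : ℝ) * ∑ r, l r ξ * log (l r ξ) + f ξ

noncomputable def extendedDivergence [Fintype ι] [CompleteSpace E] (ν : ι → E) (l : ι → E → ℝ)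
    (f : E → ℝ) (ζ ξ' : E) : ℝ :=
  (1 / 2 : ℝ) * ∑ r, (l r ζ * (log (l r ζ) - log (l r ξ')) - ⟪ζ - ξ', ν r⟫_ℝ)
    + ⟪ξ' - ζ, gradient f ξ'⟫_ℝ + f ζ - f ξ'

variable {ν : ι → E} {lam : ι → ℝ} {l : ι → E → ℝ} {f : E → ℝ}

theorem continuous_of_affine (hl : ∀ r ξ, l r ξ = ⟪ξ, ν r⟫_ℝ + lam r) (r : ι) :
    Continuous (l r) := by
  rw [funext (hl r)]; fun_prop

theorem inner_sub_eq_sub_of_affine (hl : ∀ r ξ, l r ξ = ⟪ξ, ν r⟫_ℝ + lam r) (r : ι) (ζ ξ : E) :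
    ⟪ζ - ξ, ν r⟫_ℝ = l r ζ - l r ξ := by
  rw [inner_sub_left, hl, hl]; ring

variable [Fintype ι]

theorem isOpen_setOf_forall_pos (hl : ∀ r ξ, l r ξ = ⟪ξ, ν r⟫_ℝ + lam r) :
    IsOpen {ξ | ∀ r, 0 < l r ξ} := by
  simp only [Set.ofPred_forall]
  exact isOpen_iInter_of_finite fun r => isOpen_lt continuous_const (continuous_of_affine hl r)

theorem continuous_symplecticPotential (hl : ∀ r ξ, l r ξ = ⟪ξ, ν r⟫_ℝ + lam r)
    (hf : Continuous f) : Continuous (symplecticPotential l f) := by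
  have := continuous_of_affine hl
  unfold symplecticPotential; fun_prop

variable [CompleteSpace E]

theorem tendsto_bregman_of_eqOn {φ Φ : E → ℝ} {s : Set E} (hs : IsOpen s) (hΦ : Continuous Φ)
    (hφΦ : Set.EqOn φ Φ s) {ξ' : E} (hξ' : ξ' ∈ s) (η : E) :
    Tendsto (fun ξ => φ ξ - φ ξ' - ⟪ξ - ξ', gradient φ ξ'⟫_ℝ) (𝓝[s] η)
      (𝓝 (Φ η - Φ ξ' - ⟪η - ξ', gradient Φ ξ'⟫_ℝ)) := by
  have hgrad : gradient φ ξ' = gradient Φ ξ' :=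
    Filter.EventuallyEq.gradient_eq (Filter.mem_of_superset (hs.mem_nhds hξ') hφΦ)
  rw [hgrad, hφΦ hξ']
  have hcont : Continuous fun ξ => Φ ξ - Φ ξ' - ⟪ξ - ξ', gradient Φ ξ'⟫_ℝ := by fun_prop
  exact ((hcont.tendsto η).mono_left nhdsWithin_le_nhds).congr'
    (eventually_nhdsWithin_of_forall fun ξ hξ => by simp only [hφΦ hξ])

theorem hasGradientAt_symplecticPotential (hl : ∀ r ξ, l r ξ = ⟪ξ, ν r⟫_ℝ + lam r) {ξ : E}
    (hpos : ∀ r, l r ξ ≠ 0) (hf : DifferentiableAt ℝ f ξ) :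
    HasGradientAt (symplecticPotential l f)
      ((1 / 2 : ℝ) • ∑ r, (log (l r ξ) + 1) • ν r + gradient f ξ) ξ := by
  have hlin : ∀ r, HasFDerivAt (l r) (innerSL ℝ (ν r)) ξ := fun r => by
    refine ((innerSL ℝ (ν r)).hasFDerivAt.add_const (lam r)).congr_of_eventuallyEq
      (Eventually.of_forall fun ζ => ?_)
    simp [hl, real_inner_comm]
  have hterm r := (hasDerivAt_mul_log (hpos r)).comp_hasFDerivAt ξ (hlin r)
  have hΦ : HasFDerivAt (symplecticPotential l f)
      ((1 / 2 : ℝ) • ∑ r, (log (l r ξ) + 1) • innerSL ℝ (ν r) + fderiv ℝ f ξ) ξ :=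
    ((HasFDerivAt.fun_sum fun r _ => hterm r).const_mul (1 / 2 : ℝ)).add hf.hasFDerivAt
  rw [hasGradientAt_iff_hasFDerivAt]
  refine hΦ.congr_fderiv ?_
  ext v
  simp

theorem symplecticPotential_sub_sub_inner (hl : ∀ r ξ, l r ξ = ⟪ξ, ν r⟫_ℝ + lam r) (ζ ξ : E) :
    symplecticPotential l f ζ - symplecticPotential l f ξ
        - ⟪ζ - ξ, (1 / 2 : ℝ) • ∑ r, (log (l r ξ) + 1) • ν r + gradient f ξ⟫_ℝ
      = extendedDivergence ν l f ζ ξ := by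
  have hsum : ∑ r, l r ζ * log (l r ζ) - ∑ r, l r ξ * log (l r ξ)
      - ∑ r, (log (l r ξ) + 1) * ⟪ζ - ξ, ν r⟫_ℝ
      = ∑ r, (l r ζ * (log (l r ζ) - log (l r ξ)) - ⟪ζ - ξ, ν r⟫_ℝ) := by
    simp only [← Finset.sum_sub_distrib, inner_sub_eq_sub_of_affine hl]
    refine Finset.sum_congr rfl fun r _ => by ring
  have hgrad : ⟪ξ - ζ, gradient f ξ⟫_ℝ = -⟪ζ - ξ, gradient f ξ⟫_ℝ := by
    rw [← inner_neg_left, neg_sub]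
  simp only [symplecticPotential, extendedDivergence, inner_add_right, inner_smul_right,
    inner_sum, hgrad]
  linear_combination (1 / 2 : ℝ) * hsum

theorem continuousAt_extendedDivergence (hl : ∀ r ξ, l r ξ = ⟪ξ, ν r⟫_ℝ + lam r)
    (hf : ContDiff ℝ 1 f) {η η' : E} (hηη' : ∀ r, l r η ≠ 0 → l r η' ≠ 0) :
    ContinuousAt (extendedDivergence ν l f η) η' := by
  have hgrad : Continuous (gradient f) :=
    (InnerProductSpace.toDual ℝ E).symm.continuous.comp (hf.continuous_fderiv one_ne_zero)
  have hterm : ∀ r, ContinuousAt (fun ξ' => l r η * (log (l r η) - log (l r ξ'))) η' := by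
    intro r
    by_cases hr : l r η = 0
    · simp only [hr, zero_mul]
      exact continuousAt_const
    · exact continuousAt_const.mul (continuousAt_const.sub
        ((continuous_of_affine hl r).continuousAt.log (hηη' r hr)))
  have := hf.continuous
  unfold extendedDivergence
  fun_prop

theorem extendedDivergence_eq_sum_compl [DecidableEq ι] (hl : ∀ r ξ, l r ξ = ⟪ξ, ν r⟫_ℝ + lam r)
    {S : Finset ι} {η η' : E} (hη : ∀ r ∈ S, l r η = 0) (hη' : ∀ r ∈ S, l r η' = 0) :
    extendedDivergence ν l f η η' =
      (1 / 2 : ℝ) * ∑ r ∈ Sᶜ, (l r η * (log (l r η) - log (l r η')) - ⟪η - η', ν r⟫_ℝ)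
        + ⟪η' - η, gradient f η'⟫_ℝ + f η - f η' := by
  rw [extendedDivergence, ← Finset.sum_compl_add_sum S, Finset.sum_eq_zero (s := S), add_zero]
  intro r hr
  rw [inner_sub_eq_sub_of_affine hl, hη r hr, hη' r hr]
  ring

end

theorem statement9_general {n N : ℕ}
    (ν : Fin N → EuclideanSpace ℝ (Fin n)) (lam : Fin N → ℝ)
    (l : Fin N → EuclideanSpace ℝ (Fin n) → ℝ)
    (hl : ∀ r ξ, l r ξ = ⟪ξ, ν r⟫_ℝ + lam r)
    (f : EuclideanSpace ℝ (Fin n) → ℝ) (hf : ContDiff ℝ 1 f)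
    (Pint : Set (EuclideanSpace ℝ (Fin n)))
    (hPint : Pint = {ξ | ∀ r, 0 < l r ξ})
    (φ : EuclideanSpace ℝ (Fin n) → ℝ)
    (hφ : ∀ ξ ∈ Pint, φ ξ = (1 / 2 : ℝ) * ∑ r, l r ξ * Real.log (l r ξ) + f ξ)
    (D : EuclideanSpace ℝ (Fin n) → EuclideanSpace ℝ (Fin n) → ℝ)
    (hD : ∀ ξ ξ', D ξ ξ' = φ ξ - φ ξ' - ⟪ξ - ξ', gradient φ ξ'⟫_ℝ)
    (Dbar : EuclideanSpace ℝ (Fin n) → EuclideanSpace ℝ (Fin n) → ℝ)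
    (hDbar : ∀ ζ ξ', Dbar ζ ξ' =
      (1 / 2 : ℝ) * ∑ r, (l r ζ * (Real.log (l r ζ) - Real.log (l r ξ')) - ⟪ζ - ξ', ν r⟫_ℝ)
        + ⟪ξ' - ζ, gradient f ξ'⟫_ℝ + f ζ - f ξ')
    (S : Finset (Fin N)) (η η' : EuclideanSpace ℝ (Fin n))
    (hηS : ∀ r ∈ S, l r η = 0) (hη'S : ∀ r ∈ S, l r η' = 0)
    (hη'pos : ∀ r ∉ S, 0 < l r η') :
    (∀ ξ' ∈ Pint, Tendsto (fun ξ => D ξ ξ') (nhdsWithin η Pint) (nhds (Dbar η ξ'))) ∧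
    Tendsto (fun ξ' => Dbar η ξ') (nhdsWithin η' Pint)
      (nhds ((1 / 2 : ℝ) *
          ∑ r ∈ Sᶜ, (l r η * (Real.log (l r η) - Real.log (l r η')) - ⟪η - η', ν r⟫_ℝ)
        + ⟪η' - η, gradient f η'⟫_ℝ + f η - f η')) := by
  obtain rfl : Dbar = extendedDivergence ν l f := funext fun ζ => funext (hDbar ζ)
  obtain rfl : D = fun ξ ξ' => φ ξ - φ ξ' - ⟪ξ - ξ', gradient φ ξ'⟫_ℝ :=
    funext fun ξ => funext (hD ξ)
  subst hPint
  refine ⟨fun ξ' hξ' => ?_, ?_⟩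
  · have hgrad := hasGradientAt_symplecticPotential hl (fun r => (hξ' r).ne')
      (hf.differentiable one_ne_zero ξ')
    rw [← symplecticPotential_sub_sub_inner hl, ← hgrad.gradient]
    exact tendsto_bregman_of_eqOn (isOpen_setOf_forall_pos hl)
      (continuous_symplecticPotential hl hf.continuous) hφ hξ' η
  · rw [← extendedDivergence_eq_sum_compl hl hηS hη'S]
    have hface r (hr : l r η ≠ 0) : l r η' ≠ 0 := (hη'pos r fun hrS => hr (hηS r hrS)).ne'
    exact (continuousAt_extendedDivergence hl hf hface).tendsto.mono_left nhdsWithin_le_nhds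

/-- **Theorem 5.2, continuity of the divergence at the boundary.**
Let `η, η'` lie in the relative interior of the face of `P` determined by `S`
(`l_r = 0` on `S`, `l_r > 0` off `S` at both points). Then the iterated limit of the
Bregman divergence exists: for each fixed `ξ' ∈ P°` the inner limit of `D(ξ‖ξ')` as
`ξ → η` within `P°` is `D̄(η‖ξ')`, and as `ξ' → η'` within `P°`, `D̄(η‖ξ')` converges
to the Bregman divergence of the boundary face
`D̄(η‖η') = (1/2)·Σ_{r∉S} ( l_r(η)(log l_r(η) − log l_r(η')) − ⟨η−η', ν_r⟩ )
           + ⟨η'−η, ∇f(η')⟩ + f(η) − f(η')`. -/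
theorem statement9 {n N : ℕ}
    (ν : Fin N → EuclideanSpace ℝ (Fin n)) (lam : Fin N → ℝ)
    (l : Fin N → EuclideanSpace ℝ (Fin n) → ℝ)
    (hl : ∀ r ξ, l r ξ = ⟪ξ, ν r⟫_ℝ + lam r)
    (f : EuclideanSpace ℝ (Fin n) → ℝ) (hf : ContDiff ℝ 1 f)
    (Pint P : Set (EuclideanSpace ℝ (Fin n)))
    (hPint : Pint = {ξ | ∀ r, 0 < l r ξ}) (hne : Pint.Nonempty)
    (hP : P = {ξ | ∀ r, 0 ≤ l r ξ})
    (φ : EuclideanSpace ℝ (Fin n) → ℝ)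
    (hφ : ∀ ξ ∈ Pint, φ ξ = (1 / 2 : ℝ) * ∑ r, l r ξ * Real.log (l r ξ) + f ξ)
    (D : EuclideanSpace ℝ (Fin n) → EuclideanSpace ℝ (Fin n) → ℝ)
    (hD : ∀ ξ ξ', D ξ ξ' = φ ξ - φ ξ' - ⟪ξ - ξ', gradient φ ξ'⟫_ℝ)
    (Dbar : EuclideanSpace ℝ (Fin n) → EuclideanSpace ℝ (Fin n) → ℝ)
    (hDbar : ∀ ζ ξ', Dbar ζ ξ' =
      (1 / 2 : ℝ) * ∑ r, (l r ζ * (Real.log (l r ζ) - Real.log (l r ξ')) - ⟪ζ - ξ', ν r⟫_ℝ)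
        + ⟪ξ' - ζ, gradient f ξ'⟫_ℝ + f ζ - f ξ')
    (S : Finset (Fin N)) (η η' : EuclideanSpace ℝ (Fin n))
    (hηS : ∀ r ∈ S, l r η = 0) (hη'S : ∀ r ∈ S, l r η' = 0)
    (hηpos : ∀ r ∉ S, 0 < l r η) (hη'pos : ∀ r ∉ S, 0 < l r η') :
    (∀ ξ' ∈ Pint, Tendsto (fun ξ => D ξ ξ') (nhdsWithin η Pint) (nhds (Dbar η ξ'))) ∧
    Tendsto (fun ξ' => Dbar η ξ') (nhdsWithin η' Pint)
      (nhds ((1 / 2 : ℝ) *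
          ∑ r ∈ Sᶜ, (l r η * (Real.log (l r η) - Real.log (l r η')) - ⟪η - η', ν r⟫_ℝ)
        + ⟪η' - η, gradient f η'⟫_ℝ + f η - f η')) :=
  statement9_general ν lam l hl f hf Pint hPint φ hφ D hD Dbar hDbar S η η' hηS hη'S hη'pos
end

section
/- (Theorem 5.5, extended Pythagorean theorem with one boundary point) Let η ∈ P and ξ, ξ' ∈ P°. If ⟨η − ξ, ∇φ(ξ') − ∇φ(ξ)⟩ = 0 (i.e., the ∇^flat-geodesic from ξ toward η and the dual-connection geodesic from ξ toward ξ' are perpendicular at ξ with respect to the Hessian metric Hess(φ)), then D̄(η‖ξ) + D(ξ‖ξ') = D̄(η‖ξ'). -/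
open scoped InnerProductSpace
open Filter Topology

/-!
Extend the potential by its formula `Φ(ζ) = ½ Σ lᵣ(ζ) log lᵣ(ζ) + f(ζ)` to all of
`ℝⁿ`. On `P°` it agrees with `φ`, so it has the same gradient there, and `D̄(η‖ξ')` is exactly the
Bregman expression `Φ(η) − Φ(ξ') − ⟨η − ξ', ∇Φ(ξ')⟩`. The theorem is then the three-point identity
for Bregman expressions, whose defect is `⟨η − ξ, ∇Φ(ξ') − ∇Φ(ξ)⟩`.
-/

open Real InnerProductSpace

variable {E ι : Type*} [NormedAddCommGroup E] [InnerProductSpace ℝ E]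

theorem isOpen_setOf_forall_inner_add_pos [Finite ι] {ν : ι → E} {lam : ι → ℝ} :
    IsOpen {ζ : E | ∀ r, 0 < ⟪ζ, ν r⟫_ℝ + lam r} := by
  simp only [Set.ofPred_forall]
  exact isOpen_iInter_of_finite fun r => isOpen_lt continuous_const (by fun_prop)

variable [CompleteSpace E]

section GradientCalculus

variable {f g : E → ℝ} {f' g' x : E}

theorem hasGradientAt_inner_add_const (ν : E) (c : ℝ) (x : E) :
    HasGradientAt (fun ζ => ⟪ζ, ν⟫_ℝ + c) ν x := by
  rw [hasGradientAt_iff_hasFDerivAt]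
  simpa only [toDual_apply_apply, real_inner_comm ν] using
    (toDual ℝ E ν).hasFDerivAt.add_const c

theorem HasDerivAt.comp_hasGradientAt {h : ℝ → ℝ} {h' : ℝ} (hh : HasDerivAt h h' (f x))
    (hf : HasGradientAt f f' x) : HasGradientAt (h ∘ f) (h' • f') x := by
  rw [hasGradientAt_iff_hasFDerivAt] at hf ⊢
  simpa using hh.comp_hasFDerivAt x hf

theorem HasGradientAt.add (hf : HasGradientAt f f' x) (hg : HasGradientAt g g' x) :
    HasGradientAt (fun ζ => f ζ + g ζ) (f' + g') x := by
  rw [hasGradientAt_iff_hasFDerivAt] at hf hg ⊢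
  rw [map_add]
  exact hf.add hg

theorem HasGradientAt.const_mul (c : ℝ) (hf : HasGradientAt f f' x) :
    HasGradientAt (fun ζ => c * f ζ) (c • f') x := by
  rw [hasGradientAt_iff_hasFDerivAt] at hf ⊢
  simpa using hf.const_mul c

theorem HasGradientAt.sum [Fintype ι] {F : ι → E → ℝ} {F' : ι → E}
    (hF : ∀ i, HasGradientAt (F i) (F' i) x) :
    HasGradientAt (fun ζ => ∑ i, F i ζ) (∑ i, F' i) x := by
  simp only [hasGradientAt_iff_hasFDerivAt] at hF ⊢
  simpa using HasFDerivAt.fun_sum (u := Finset.univ) fun i _ => hF i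

end GradientCalculus

/-- Meaningful only where `Φ` is differentiable at `b`; elsewhere `gradient Φ b` is the junk `0`. -/
noncomputable def bregman (Φ : E → ℝ) (a b : E) : ℝ := Φ a - Φ b - ⟪a - b, gradient Φ b⟫_ℝ

theorem bregman_add_bregman (Φ : E → ℝ) (a b c : E) :
    bregman Φ a b + bregman Φ b c = bregman Φ a c + ⟪a - b, gradient Φ c - gradient Φ b⟫_ℝ := by
  simp only [bregman, inner_sub_left, inner_sub_right]
  ring

section ToricPotential

variable [Fintype ι] (ν : ι → E) (lam : ι → ℝ) (f : E → ℝ)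

/-- The paper's `φ` extended by its formula to all of `E`; at the boundary of `P` the terms
`0 * log 0 = 0` realise the paper's convention. -/
noncomputable def toricPotential (ζ : E) : ℝ :=
  (1 / 2 : ℝ) * ∑ r, (⟪ζ, ν r⟫_ℝ + lam r) * log (⟪ζ, ν r⟫_ℝ + lam r) + f ζ

variable {ν lam f}

theorem hasGradientAt_toricPotential {x : E} (hx : ∀ r, 0 < ⟪x, ν r⟫_ℝ + lam r)
    (hf : DifferentiableAt ℝ f x) :
    HasGradientAt (toricPotential ν lam f)
      ((1 / 2 : ℝ) • ∑ r, (log (⟪x, ν r⟫_ℝ + lam r) + 1) • ν r + gradient f x) x := by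
  have hterm r : HasGradientAt (fun ζ => (⟪ζ, ν r⟫_ℝ + lam r) * log (⟪ζ, ν r⟫_ℝ + lam r))
      ((log (⟪x, ν r⟫_ℝ + lam r) + 1) • ν r) x :=
    (hasDerivAt_mul_log (hx r).ne').comp_hasGradientAt (f := fun ζ => ⟪ζ, ν r⟫_ℝ + lam r)
      (hasGradientAt_inner_add_const _ _ x)
  exact ((HasGradientAt.sum hterm).const_mul _).add hf.hasGradientAt

theorem bregman_toricPotential {ξ' : E} (hξ' : ∀ r, 0 < ⟪ξ', ν r⟫_ℝ + lam r)
    (hf : DifferentiableAt ℝ f ξ') (η : E) :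
    bregman (toricPotential ν lam f) η ξ' =
      (1 / 2 : ℝ) * ∑ r, ((⟪η, ν r⟫_ℝ + lam r) *
          (log (⟪η, ν r⟫_ℝ + lam r) - log (⟪ξ', ν r⟫_ℝ + lam r)) - ⟪η - ξ', ν r⟫_ℝ)
        + ⟪ξ' - η, gradient f ξ'⟫_ℝ + f η - f ξ' := by
  rw [bregman, (hasGradientAt_toricPotential hξ' hf).gradient, toricPotential, toricPotential]
  simp only [inner_add_right, real_inner_smul_right, inner_sum, inner_sub_left]
  have hsum : ∑ r, ((⟪η, ν r⟫_ℝ + lam r) *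
        (log (⟪η, ν r⟫_ℝ + lam r) - log (⟪ξ', ν r⟫_ℝ + lam r)) - (⟪η, ν r⟫_ℝ - ⟪ξ', ν r⟫_ℝ))
      = ∑ r, (⟪η, ν r⟫_ℝ + lam r) * log (⟪η, ν r⟫_ℝ + lam r)
        - ∑ r, (⟪ξ', ν r⟫_ℝ + lam r) * log (⟪ξ', ν r⟫_ℝ + lam r)
        - (∑ r, (log (⟪ξ', ν r⟫_ℝ + lam r) + 1) * ⟪η, ν r⟫_ℝ
          - ∑ r, (log (⟪ξ', ν r⟫_ℝ + lam r) + 1) * ⟪ξ', ν r⟫_ℝ) := by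
    simp only [← Finset.sum_sub_distrib]
    exact Finset.sum_congr rfl fun r _ => by ring
  linear_combination (1 / 2 : ℝ) * hsum.symm

end ToricPotential

theorem statement11_general {n N : ℕ}
    (ν : Fin N → EuclideanSpace ℝ (Fin n)) (lam : Fin N → ℝ)
    (l : Fin N → EuclideanSpace ℝ (Fin n) → ℝ)
    (hl : ∀ r ξ, l r ξ = ⟪ξ, ν r⟫_ℝ + lam r)
    (f : EuclideanSpace ℝ (Fin n) → ℝ) (hf : ContDiff ℝ 1 f)
    (Pint : Set (EuclideanSpace ℝ (Fin n)))
    (hPint : Pint = {ξ | ∀ r, 0 < l r ξ})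
    (φ : EuclideanSpace ℝ (Fin n) → ℝ)
    (hφ : ∀ ξ ∈ Pint, φ ξ = (1 / 2 : ℝ) * ∑ r, l r ξ * Real.log (l r ξ) + f ξ)
    (D : EuclideanSpace ℝ (Fin n) → EuclideanSpace ℝ (Fin n) → ℝ)
    (hD : ∀ ξ ξ', D ξ ξ' = φ ξ - φ ξ' - ⟪ξ - ξ', gradient φ ξ'⟫_ℝ)
    (Dbar : EuclideanSpace ℝ (Fin n) → EuclideanSpace ℝ (Fin n) → ℝ)
    (hDbar : ∀ ζ ξ', Dbar ζ ξ' =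
      (1 / 2 : ℝ) * ∑ r, (l r ζ * (Real.log (l r ζ) - Real.log (l r ξ')) - ⟪ζ - ξ', ν r⟫_ℝ)
        + ⟪ξ' - ζ, gradient f ξ'⟫_ℝ + f ζ - f ξ')
    (η : EuclideanSpace ℝ (Fin n))
    (ξ : EuclideanSpace ℝ (Fin n)) (hξ : ξ ∈ Pint)
    (ξ' : EuclideanSpace ℝ (Fin n)) (hξ' : ξ' ∈ Pint)
    (horth : ⟪η - ξ, gradient φ ξ' - gradient φ ξ⟫_ℝ = 0) :
    Dbar η ξ + D ξ ξ' = Dbar η ξ' := by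
  obtain rfl : l = fun r ζ => ⟪ζ, ν r⟫_ℝ + lam r := funext₂ hl
  subst hPint
  have hfd : Differentiable ℝ f := hf.differentiable one_ne_zero
  have hφ_eq : ∀ x ∈ {ζ | ∀ r, 0 < ⟪ζ, ν r⟫_ℝ + lam r}, φ =ᶠ[𝓝 x] toricPotential ν lam f :=
    fun x hx => eventually_of_mem (isOpen_setOf_forall_inner_add_pos.mem_nhds hx) hφ
  have hDbar_eq : ∀ x ∈ {ζ | ∀ r, 0 < ⟪ζ, ν r⟫_ℝ + lam r},
      Dbar η x = bregman (toricPotential ν lam f) η x :=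
    fun x hx => by rw [hDbar, bregman_toricPotential hx (hfd x)]
  have hD_eq : D ξ ξ' = bregman (toricPotential ν lam f) ξ ξ' := by
    rw [hD, bregman, (hφ_eq ξ hξ).eq_of_nhds, (hφ_eq ξ' hξ').eq_of_nhds, (hφ_eq ξ' hξ').gradient_eq]
  rw [(hφ_eq ξ hξ).gradient_eq, (hφ_eq ξ' hξ').gradient_eq] at horth
  rw [hDbar_eq ξ hξ, hDbar_eq ξ' hξ', hD_eq, bregman_add_bregman, horth, add_zero]

/-- **Theorem 5.5, extended Pythagorean theorem with one boundary
point.** For `η ∈ P` and `ξ, ξ' ∈ P°`, if `⟨η − ξ, ∇φ(ξ') − ∇φ(ξ)⟩ = 0`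
(perpendicularity at `ξ` w.r.t. the Hessian metric), then
`D̄(η‖ξ) + D(ξ‖ξ') = D̄(η‖ξ')`. -/
theorem statement11 {n N : ℕ}
    (ν : Fin N → EuclideanSpace ℝ (Fin n)) (lam : Fin N → ℝ)
    (l : Fin N → EuclideanSpace ℝ (Fin n) → ℝ)
    (hl : ∀ r ξ, l r ξ = ⟪ξ, ν r⟫_ℝ + lam r)
    (f : EuclideanSpace ℝ (Fin n) → ℝ) (hf : ContDiff ℝ 1 f)
    (Pint P : Set (EuclideanSpace ℝ (Fin n)))
    (hPint : Pint = {ξ | ∀ r, 0 < l r ξ}) (hne : Pint.Nonempty)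
    (hP : P = {ξ | ∀ r, 0 ≤ l r ξ})
    (φ : EuclideanSpace ℝ (Fin n) → ℝ)
    (hφ : ∀ ξ ∈ Pint, φ ξ = (1 / 2 : ℝ) * ∑ r, l r ξ * Real.log (l r ξ) + f ξ)
    (D : EuclideanSpace ℝ (Fin n) → EuclideanSpace ℝ (Fin n) → ℝ)
    (hD : ∀ ξ ξ', D ξ ξ' = φ ξ - φ ξ' - ⟪ξ - ξ', gradient φ ξ'⟫_ℝ)
    (Dbar : EuclideanSpace ℝ (Fin n) → EuclideanSpace ℝ (Fin n) → ℝ)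
    (hDbar : ∀ ζ ξ', Dbar ζ ξ' =
      (1 / 2 : ℝ) * ∑ r, (l r ζ * (Real.log (l r ζ) - Real.log (l r ξ')) - ⟪ζ - ξ', ν r⟫_ℝ)
        + ⟪ξ' - ζ, gradient f ξ'⟫_ℝ + f ζ - f ξ')
    (η : EuclideanSpace ℝ (Fin n)) (hη : η ∈ P)
    (ξ : EuclideanSpace ℝ (Fin n)) (hξ : ξ ∈ Pint)
    (ξ' : EuclideanSpace ℝ (Fin n)) (hξ' : ξ' ∈ Pint)
    (horth : ⟪η - ξ, gradient φ ξ' - gradient φ ξ⟫_ℝ = 0) :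
    Dbar η ξ + D ξ ξ' = Dbar η ξ' :=
  statement11_general ν lam l hl f hf Pint hPint φ hφ D hD Dbar hDbar η ξ hξ ξ' hξ' horth
end

section
/- (Limit of the divergence along a geodesic approaching the boundary, Section 6.1) Let a, b > 0 with a + b < 1 and v > 0. Set ξ := (a, b) and γ(t) := ( a·e^{t v} / (1 + (a+b)·e^{t v}), b·e^{t v} / (1 + (a+b)·e^{t v}) ). Then D_P(γ(t) ‖ ξ) → −log(a + b) as t → ∞, where D_P(x ‖ x') := x₁·log(x₁/x₁') + x₂·log(x₂/x₂') + (1 − x₁ − x₂)·log( (1 − x₁ − x₂) / (1 − x₁' − x₂') ). -/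
open Filter Topology Real

/-!
Each summand of `D_P(x ‖ ξ)` has the form `y * log (y / c)`, which is continuous in `y`
(at `y = 0` by `y log y → 0`), so `t ↦ D_P(γ t ‖ ξ)` tends to the divergence evaluated at the
limit point `(a/(a+b), b/(a+b))` of `γ`. There the last summand vanishes and the first two add up
to `log (1/(a+b))`.
-/

theorem Real.continuous_mul_log_div (c : ℝ) : Continuous fun x : ℝ => x * log (x / c) := by
  rcases eq_or_ne c 0 with rfl | hc
  · simpa using continuous_const
  · have h : (fun x : ℝ => x * log (x / c)) = fun x => x * log x - x * log c := by
      funext x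
      rcases eq_or_ne x 0 with rfl | hx
      · simp
      · rw [log_div hx hc]; ring
    rw [h]
    exact continuous_mul_log.sub (continuous_id.mul continuous_const)

theorem tendsto_div_one_add_mul_atTop {s : ℝ} (hs : s ≠ 0) :
    Tendsto (fun x : ℝ => x / (1 + s * x)) atTop (𝓝 s⁻¹) := by
  have h : Tendsto (fun x : ℝ => (x⁻¹ + s)⁻¹) atTop (𝓝 (0 + s)⁻¹) :=
    (tendsto_inv_atTop_zero.add_const s).inv₀ (by simpa using hs)
  rw [zero_add] at h
  refine h.congr' ?_
  filter_upwards [eventually_gt_atTop 0] with x hx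
  field_simp

theorem mul_log_div_sum_at_normalized_eq_neg_log {a b : ℝ} (ha : a ≠ 0) (hb : b ≠ 0)
    (hs : a + b ≠ 0) (c : ℝ) :
    a / (a + b) * log (a / (a + b) / a) + b / (a + b) * log (b / (a + b) / b) +
      (1 - a / (a + b) - b / (a + b)) * log ((1 - a / (a + b) - b / (a + b)) / c) =
      -log (a + b) := by
  have hsum : 1 - a / (a + b) - b / (a + b) = 0 := by field_simp; ring
  have hinv : ∀ {x : ℝ}, x ≠ 0 → x / (a + b) / x = (a + b)⁻¹ := fun hx => by field_simp
  rw [hsum, hinv ha, hinv hb, log_inv, zero_mul, add_zero, ← add_mul, ← add_div,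
    div_self hs]
  ring

theorem statement14_general (a b v : ℝ) (ha : 0 < a) (hb : 0 < b)
    (hv : 0 < v)
    (γ : ℝ → ℝ × ℝ)
    (hγ : ∀ t, γ t =
      (a * Real.exp (t * v) / (1 + (a + b) * Real.exp (t * v)),
       b * Real.exp (t * v) / (1 + (a + b) * Real.exp (t * v))))
    (DP : ℝ × ℝ → ℝ × ℝ → ℝ)
    (hDP : ∀ x x', DP x x' =
      x.1 * Real.log (x.1 / x'.1) + x.2 * Real.log (x.2 / x'.2) +
        (1 - x.1 - x.2) * Real.log ((1 - x.1 - x.2) / (1 - x'.1 - x'.2))) :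
    Tendsto (fun t => DP (γ t) (a, b)) atTop (nhds (-Real.log (a + b))) := by
  have hs : a + b ≠ 0 := by positivity
  have hratio : Tendsto (fun t => exp (t * v) / (1 + (a + b) * exp (t * v))) atTop
      (𝓝 (a + b)⁻¹) :=
    (tendsto_div_one_add_mul_atTop hs).comp
      (tendsto_exp_atTop.comp (tendsto_id.atTop_mul_const hv))
  have hγlim : Tendsto γ atTop (𝓝 (a / (a + b), b / (a + b))) := by
    simp only [funext hγ, mul_div_assoc, div_eq_mul_inv a, div_eq_mul_inv b]
    exact (hratio.const_mul a).prodMk_nhds (hratio.const_mul b)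
  have hcont : Continuous fun x : ℝ × ℝ => DP x (a, b) := by
    simp only [hDP]
    exact ((continuous_mul_log_div a).comp continuous_fst |>.add
      ((continuous_mul_log_div b).comp continuous_snd)).add
      ((continuous_mul_log_div _).comp (by fun_prop))
  have hlim := (hcont.tendsto _).comp hγlim
  rwa [Function.comp_def, hDP, mul_log_div_sum_at_normalized_eq_neg_log ha.ne' hb.ne' hs]
    at hlim

/-- **limit of the divergence along a geodesic approaching the boundary,
Section 6.1.** For `a, b > 0` with `a + b < 1`, `v > 0`, `ξ = (a,b)` and
`γ(t) = ( a·e^{tv}/(1+(a+b)e^{tv}), b·e^{tv}/(1+(a+b)e^{tv}) )`, the Kullback–Leibler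
(Bregman) divergence `D_P(γ(t)‖ξ)` tends to `−log(a+b)` as `t → ∞`, where
`D_P(x‖x') = x₁ log(x₁/x₁') + x₂ log(x₂/x₂') + (1−x₁−x₂) log((1−x₁−x₂)/(1−x₁'−x₂'))`. -/
theorem statement14 (a b v : ℝ) (ha : 0 < a) (hb : 0 < b) (hab : a + b < 1)
    (hv : 0 < v)
    (γ : ℝ → ℝ × ℝ)
    (hγ : ∀ t, γ t =
      (a * Real.exp (t * v) / (1 + (a + b) * Real.exp (t * v)),
       b * Real.exp (t * v) / (1 + (a + b) * Real.exp (t * v))))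
    (DP : ℝ × ℝ → ℝ × ℝ → ℝ)
    (hDP : ∀ x x', DP x x' =
      x.1 * Real.log (x.1 / x'.1) + x.2 * Real.log (x.2 / x'.2) +
        (1 - x.1 - x.2) * Real.log ((1 - x.1 - x.2) / (1 - x'.1 - x'.2))) :
    Tendsto (fun t => DP (γ t) (a, b)) atTop (nhds (-Real.log (a + b))) :=
  statement14_general a b v ha hb hv γ hγ DP hDP
end
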